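/- arXiv:2506.01155 — 2 statements merged into one kernel-verified Lean document; each statement's English description precedes it below -/
import Mathlib

section
/- Fix d ≤ n/2 and t, δ > 0. Define Λ_{t,δ} := B_{n−d}(0,t) ∩ (δ·ℤ^{n−d}), where B_{n−d}(0,t) is the Euclidean ball of radius t centered at 0 in ℝ^{n−d}. Then with N = ⌈t/(δ√n)⌉ there exists a family F of (N,d,6)-boxes with |F| ≤ 2^{10n} such that Λ_{t,δ} ⊆ ∪_{B∈F} δ·B. -/
open MeasureTheory ProbabilityTheory Matrix Finset

noncomputable section

/-- Euclidean space `ℝ^n`. -/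
abbrev ESp (n : ℕ) : Type := EuclideanSpace ℝ (Fin n)

/-- View a plain vector as an element of Euclidean space. -/
def toE {n : ℕ} (x : Fin n → ℝ) : ESp n := WithLp.toLp 2 x

/-- An `(N, d, κ)`-box: a product `B_{d+1} × ⋯ × B_n ⊆ ℤ^{n-d}` (here indexed
by `Fin (n-d)`) with `|Bᵢ| ≥ N` for every `i` and `|B| ≤ (κN)^{n-d}`. -/
def IsBox {m : ℕ} (N : ℕ) (κ : ℝ) (Bx : Fin m → Finset ℤ) : Prop :=
  (∀ i, N ≤ (Bx i).card) ∧ (∏ i, ((Bx i).card : ℝ)) ≤ (κ * (N : ℝ)) ^ m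

/-!
Write a lattice point as `v = δ z` and put each `zᵢ` into the interval of `N * 2 ^ kᵢ` integers
on its side of `0`, with `kᵢ` the least level for which this works. Since `kᵢ ≤ ⌊|zᵢ| / N⌋`, we
get `N² kᵢ ≤ zᵢ²`, so `N² ∑ kᵢ ≤ ‖v‖² / δ² ≤ n N²`, i.e. `∑ kᵢ ≤ n`. Hence the box is determined
by a sign pattern and a vector `k` with `∑ kᵢ ≤ n` (at most `2 ^ m * 2 ^ (m + n)` choices), and its
volume is `N ^ m * 2 ^ ∑ kᵢ ≤ (4 N) ^ m` because `n ≤ 2 m`.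
-/

theorem IsBox.mono {m N : ℕ} {κ κ' : ℝ} {Bx : Fin m → Finset ℤ} (hBx : IsBox N κ Bx)
    (hκ : 0 ≤ κ) (hκκ' : κ ≤ κ') : IsBox N κ' Bx :=
  ⟨hBx.1, hBx.2.trans (by gcongr)⟩

def dyadicInterval (N k : ℕ) : Bool → Finset ℤ
  | true => Ico 0 (N * 2 ^ k)
  | false => Ioc (-(N * 2 ^ k)) 0

theorem card_dyadicInterval (N k : ℕ) (s : Bool) : #(dyadicInterval N k s) = N * 2 ^ k := by
  cases s <;> simp [dyadicInterval, Int.card_Ico, Int.card_Ioc] <;> norm_cast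

/-- The least `k` with `|z| < N * 2 ^ k`. -/
def dyadicLevel (N : ℕ) (z : ℤ) : ℕ := Nat.size (z.natAbs / N)

theorem mem_dyadicInterval_dyadicLevel {N : ℕ} (hN : 0 < N) (z : ℤ) :
    z ∈ dyadicInterval N (dyadicLevel N z) (decide (0 ≤ z)) := by
  have hlt : z.natAbs < 2 ^ dyadicLevel N z * N :=
    (Nat.div_lt_iff_lt_mul hN).mp (Nat.lt_size_self _)
  have hltZ : |z| < N * 2 ^ dyadicLevel N z := by
    rw [Int.abs_eq_natAbs]; exact_mod_cast (mul_comm (2 ^ _) N) ▸ hlt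
  rcases le_or_gt 0 z with hz | hz
  · simp [dyadicInterval, hz, abs_of_nonneg hz] at hltZ ⊢; omega
  · simp [dyadicInterval, hz.not_ge, abs_of_neg hz] at hltZ ⊢; omega

theorem sq_mul_dyadicLevel_le (N : ℕ) (z : ℤ) : (N : ℤ) ^ 2 * dyadicLevel N z ≤ z ^ 2 := by
  set q := z.natAbs / N
  have hsize : dyadicLevel N z ≤ q := Nat.size_le.mpr q.lt_two_pow_self
  have hq : N * q ≤ z.natAbs := Nat.mul_div_le _ _
  rw [← Int.natAbs_sq z]
  exact_mod_cast calc
    N ^ 2 * dyadicLevel N z ≤ N ^ 2 * q ^ 2 := by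
      gcongr; exact hsize.trans (Nat.le_self_pow two_ne_zero q)
    _ = (N * q) ^ 2 := by ring
    _ ≤ z.natAbs ^ 2 := by gcongr

/-- The `k : Fin m → ℕ` with `∑ i, k i ≤ n`, as truncated compositions of `n` into `m + 1` parts,
which makes the stars-and-bars count available. -/
def levelVectors (m n : ℕ) : Finset (Fin m → ℕ) :=
  (piAntidiag univ n).image Fin.init

theorem mem_levelVectors {m n : ℕ} {k : Fin m → ℕ} : k ∈ levelVectors m n ↔ ∑ i, k i ≤ n := by
  simp only [levelVectors, mem_image, mem_piAntidiag, mem_univ, implies_true, and_true]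
  constructor
  · rintro ⟨f, rfl, rfl⟩
    simp [Fin.sum_univ_castSucc, Fin.init]
  · intro hk
    refine ⟨Fin.snoc k (n - ∑ i, k i), ?_, Fin.init_snoc _ _⟩
    simp [Fin.sum_univ_castSucc, hk]

theorem card_piAntidiag_univ_fin (m n : ℕ) :
    #(piAntidiag (univ : Finset (Fin m)) n) = (m + n - 1).choose n := by
  rw [← map_sym_eq_piAntidiag, card_map, sym_univ, card_univ, Sym.card_sym_eq_choose,
    Fintype.card_fin]

theorem card_levelVectors_le (m n : ℕ) : #(levelVectors m n) ≤ 2 ^ (m + n) :=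
  calc #(levelVectors m n) ≤ #(piAntidiag (univ : Finset (Fin (m + 1))) n) := card_image_le
    _ = (m + n).choose n := by rw [card_piAntidiag_univ_fin, Nat.add_right_comm, Nat.add_sub_cancel]
    _ ≤ 2 ^ (m + n) := Nat.choose_le_two_pow _ _

def dyadicBoxes (N m n : ℕ) : Finset (Fin m → Finset ℤ) :=
  (levelVectors m n ×ˢ univ).image fun p : (Fin m → ℕ) × (Fin m → Bool) ↦
    fun i ↦ dyadicInterval N (p.1 i) (p.2 i)

theorem dyadicBoxes_nonempty (N m n : ℕ) : (dyadicBoxes N m n).Nonempty :=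
  (Nonempty.product ⟨0, by simp [mem_levelVectors]⟩ univ_nonempty).image _

theorem card_dyadicBoxes_le (N m n : ℕ) : #(dyadicBoxes N m n) ≤ 2 ^ (n + 2 * m) :=
  calc #(dyadicBoxes N m n) ≤ #(levelVectors m n) * 2 ^ m := by
        refine card_image_le.trans_eq ?_
        simp [card_product]
    _ ≤ 2 ^ (m + n) * 2 ^ m := by gcongr; exact card_levelVectors_le m n
    _ = 2 ^ (n + 2 * m) := by rw [← pow_add]; ring_nf

theorem isBox_of_mem_dyadicBoxes {N m n : ℕ} (hn : n ≤ 2 * m) {Bx : Fin m → Finset ℤ}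
    (hBx : Bx ∈ dyadicBoxes N m n) : IsBox N 4 Bx := by
  obtain ⟨⟨k, s⟩, hks, rfl⟩ := mem_image.mp hBx
  have hk : ∑ i, k i ≤ 2 * m := (mem_levelVectors.mp (mem_product.mp hks).1).trans hn
  refine ⟨fun i ↦ ?_, ?_⟩
  · rw [card_dyadicInterval]; exact Nat.le_mul_of_pos_right N (by positivity)
  · simp only [card_dyadicInterval]
    exact_mod_cast calc
      ∏ i, N * 2 ^ k i = N ^ m * 2 ^ ∑ i, k i := by
        rw [prod_mul_distrib, prod_const, card_univ, Fintype.card_fin, prod_pow_eq_pow_sum]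
      _ ≤ N ^ m * 2 ^ (2 * m) := by gcongr; norm_num
      _ = (4 * N) ^ m := by rw [pow_mul, mul_pow]; ring

theorem exists_mem_dyadicBoxes {N m n : ℕ} (hN : 0 < N) (z : Fin m → ℤ)
    (hz : ∑ i, z i ^ 2 ≤ n * N ^ 2) : ∃ Bx ∈ dyadicBoxes N m n, ∀ i, z i ∈ Bx i := by
  have hsum : ((N : ℤ) ^ 2) * ∑ i, (dyadicLevel N (z i) : ℤ) ≤ (N : ℤ) ^ 2 * n :=
    calc ((N : ℤ) ^ 2) * ∑ i, (dyadicLevel N (z i) : ℤ) ≤ ∑ i, z i ^ 2 := by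
          rw [mul_sum]; exact sum_le_sum fun i _ ↦ sq_mul_dyadicLevel_le N (z i)
      _ ≤ (N : ℤ) ^ 2 * n := by linarith
  have hlevel : (fun i ↦ dyadicLevel N (z i)) ∈ levelVectors m n := by
    rw [mem_levelVectors]
    exact_mod_cast le_of_mul_le_mul_left hsum (by positivity)
  have hks : (fun i ↦ dyadicLevel N (z i), fun i ↦ decide (0 ≤ z i)) ∈ levelVectors m n ×ˢ univ :=
    mem_product.mpr ⟨hlevel, mem_univ _⟩
  exact ⟨_, mem_image_of_mem _ hks, fun i ↦ mem_dyadicInterval_dyadicLevel hN (z i)⟩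

theorem sum_sq_le_of_norm_le {m : ℕ} {v : EuclideanSpace ℝ (Fin m)} {z : Fin m → ℤ}
    {δ t M : ℝ} (hδ : 0 < δ) (hv : ‖v‖ ≤ t) (hvz : ∀ i, v i = δ * z i) (htM : t ≤ δ * M) :
    ∑ i, (z i : ℝ) ^ 2 ≤ M ^ 2 := by
  have hnorm : ‖v‖ ^ 2 = δ ^ 2 * ∑ i, (z i : ℝ) ^ 2 := by
    simp only [EuclideanSpace.real_norm_sq_eq, hvz, mul_pow, mul_sum]
  have : δ ^ 2 * ∑ i, (z i : ℝ) ^ 2 ≤ δ ^ 2 * M ^ 2 := by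
    rw [← hnorm, ← mul_pow]; gcongr; exact hv.trans htM
  exact le_of_mul_le_mul_left this (by positivity)

/-- **Lemma 5.6.** Covering of `Λ_{t,δ} = B_{n-d}(0,t) ∩ δℤ^{n-d}` by
`(N, d, 6)`-boxes with `N = ⌈t/(δ√n)⌉`, using a family of at most `2^{10n}`
boxes. -/
theorem box_covering (n d : ℕ) (hd : d ≤ n / 2) (t δ : ℝ)
    (ht : 0 < t) (hδ : 0 < δ) :
    ∃ F : Finset (Fin (n - d) → Finset ℤ),
      (∀ Bx ∈ F, IsBox (Nat.ceil (t / (δ * Real.sqrt n))) 6 Bx) ∧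
      (F.card : ℝ) ≤ 2 ^ (10 * n) ∧
      ∀ v : ESp (n - d), ‖v‖ ≤ t → (∀ i, ∃ z : ℤ, v i = δ * (z : ℝ)) →
        ∃ Bx ∈ F, ∀ i, ∃ z ∈ Bx i, v i = δ * (z : ℝ) := by
  set N := ⌈t / (δ * √n)⌉₊
  refine ⟨dyadicBoxes N (n - d) n,
    fun Bx hBx ↦ (isBox_of_mem_dyadicBoxes (by omega) hBx).mono (by norm_num) (by norm_num),
    ?_, fun v hv hvz ↦ ?_⟩
  · exact_mod_cast (card_dyadicBoxes_le N _ n).trans (Nat.pow_le_pow_right two_pos (by omega))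
  choose z hz using hvz
  obtain ⟨Bx, hBx, hzB⟩ : ∃ Bx ∈ dyadicBoxes N (n - d) n, ∀ i, z i ∈ Bx i := by
    rcases isEmpty_or_nonempty (Fin (n - d)) with hm | ⟨⟨i, hi⟩⟩
    · obtain ⟨Bx, hBx⟩ := dyadicBoxes_nonempty N (n - d) n
      exact ⟨Bx, hBx, isEmptyElim⟩
    have hn : 0 < (n : ℝ) := by norm_cast; omega
    have htN : t ≤ δ * (N * √n) := by
      have := Nat.le_ceil (t / (δ * √n))
      rw [div_le_iff₀ (by positivity)] at this
      linarith
    have hzN := sum_sq_le_of_norm_le hδ hv hz htN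
    rw [mul_pow, Real.sq_sqrt hn.le, mul_comm] at hzN
    exact exists_mem_dyadicBoxes (Nat.ceil_pos.mpr (by positivity)) z (by exact_mod_cast hzN)
  exact ⟨Bx, hBx, fun i ↦ ⟨z i, hzB i, hz i⟩⟩
end
end

section
/- For m ∈ ℕ let G_m be the adjacency matrix of the Erdős–Rényi graph G(m, 1/2), viewed as a real matrix. Then for every n ∈ ℕ and every integer k with 0 ≤ k ≤ n−1: P(Rank(G_n) = k) ≤ 2·P(Rank(G_{2n−k−1}) = 2n−k−2). -/
/-!
Reveal the random matrix one row and column at a time. If the new column, restricted to the old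
rows, lies outside the column space of the current symmetric matrix `A`, the rank jumps by
exactly two. That column has i.i.d. Bernoulli(1/2) entries independent of `A`, and a subspace of
dimension `r` contains at most `2 ^ r` vectors of `{0,1}^m`, so the jump fails with probability at
most `2 ^ (r - m)`. As the leading `m × m` block of `G_{m+1}` is distributed like `G_m`, this
gives `P(rank G_{m+1} = r + 2) ≥ (1 - 2 ^ (r - m)) P(rank G_m = r)`. Starting from rank `k` at
size `n = k + c + 1` and adding `c` rows, the corank before step `j` is `c + 1 - j`, and
`∏_{j < c} (1 - 2 ^ (j - c - 1)) ≥ 1/2`.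
-/

open MeasureTheory ProbabilityTheory Matrix Finset

noncomputable section

def bernoulliLaw (p : ℝ) : Measure ℝ :=
  ENNReal.ofReal p • Measure.dirac 1 + ENNReal.ofReal (1 - p) • Measure.dirac 0

/-- `G` is the adjacency matrix of an Erdős–Rényi graph `G(m,p)`:
a random symmetric matrix with zero diagonal whose entries above the
diagonal are i.i.d. Bernoulli(p). -/
def IsERMatrix {Ω : Type*} [MeasureSpace Ω] {m : ℕ} (p : ℝ)
    (G : Ω → Matrix (Fin m) (Fin m) ℝ) : Prop :=
  (∀ ω, (G ω).IsSymm) ∧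
  (∀ ω i, G ω i i = 0) ∧
  (∀ i j : Fin m, Measurable fun ω => G ω i j) ∧
  iIndepFun
    (fun q : {q : Fin m × Fin m // q.1 < q.2} => fun ω => G ω q.1.1 q.1.2) volume ∧
  ∀ q : {q : Fin m × Fin m // q.1 < q.2},
    Measure.map (fun ω => G ω q.1.1 q.1.2) volume = bernoulliLaw p

namespace Matrix

variable {K : Type*} [Field K] {ι κ : Type*}

theorem exists_linearIndependent_col_submatrix [Fintype κ] (A : Matrix ι κ K) {r : ℕ}
    (hr : r ≤ A.rank) : ∃ g : Fin r → κ, LinearIndependent K (A.submatrix id g).col := by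
  obtain ⟨τ, a, ha, hspan, hli⟩ := exists_linearIndependent' K A.col
  have : Fintype τ := Fintype.ofInjective a ha
  have hcard : Fintype.card τ = A.rank := by
    rw [rank_eq_finrank_span_cols, ← hspan, finrank_span_eq_card hli]
  obtain ⟨e⟩ : Nonempty (Fin r ↪ τ) := Function.Embedding.nonempty_of_card_le (by simpa [hcard])
  exact ⟨a ∘ e, hli.comp e e.injective⟩

theorem le_rank_iff_exists_det_submatrix_ne_zero [Fintype ι] [Fintype κ] (A : Matrix ι κ K)
    (r : ℕ) : r ≤ A.rank ↔ ∃ (f : Fin r → ι) (g : Fin r → κ), (A.submatrix f g).det ≠ 0 := by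
  refine ⟨fun hr => ?_, fun ⟨f, g, h⟩ => ?_⟩
  · obtain ⟨g, hg⟩ := A.exists_linearIndependent_col_submatrix hr
    have hB : r ≤ (A.submatrix id g)ᵀ.rank := by
      rw [LinearIndependent.rank_matrix (by rwa [row_transpose]), Fintype.card_fin]
    obtain ⟨f, hf⟩ := exists_linearIndependent_col_submatrix _ hB
    refine ⟨f, g, fun h0 => ?_⟩
    rw [linearIndependent_cols_iff_isUnit, isUnit_iff_isUnit_det,
      show (A.submatrix id g)ᵀ.submatrix id f = (A.submatrix f g)ᵀ from rfl, det_transpose] at hf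
    exact hf.ne_zero h0
  · calc r = (A.submatrix f g).rank := by rw [rank_of_det_ne_zero h, Fintype.card_fin]
      _ ≤ A.rank := rank_submatrix_le A f g

theorem span_range_col_eq_span_insert {m : ℕ} (M : Matrix ι (Fin (m + 1)) K) :
    Submodule.span K (Set.range M.col) = Submodule.span K
      (insert (M.col (Fin.last m)) (Set.range (M.submatrix id Fin.castSucc).col)) := by
  conv_lhs => rw [← Fin.snoc_init_self M.col]
  rw [Fin.range_snoc]
  rfl

variable [Fintype ι] {m : ℕ}

theorem rank_eq_rank_submatrix_castSucc_add_one (M : Matrix ι (Fin (m + 1)) K)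
    (hM : M.col (Fin.last m) ∉ Submodule.span K (Set.range (M.submatrix id Fin.castSucc).col)) :
    M.rank = (M.submatrix id Fin.castSucc).rank + 1 := by
  rw [rank_eq_finrank_span_cols, rank_eq_finrank_span_cols, span_range_col_eq_span_insert,
    Submodule.span_insert, sup_comm, Submodule.finrank_sup_span_singleton hM]

theorem col_last_mem_span_iff_rank_eq (M : Matrix ι (Fin (m + 1)) K) :
    M.col (Fin.last m) ∈ Submodule.span K (Set.range (M.submatrix id Fin.castSucc).col) ↔
      M.rank = (M.submatrix id Fin.castSucc).rank := by
  refine ⟨fun hM => ?_, fun h => by_contra fun hM => ?_⟩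
  · rw [rank_eq_finrank_span_cols, rank_eq_finrank_span_cols, span_range_col_eq_span_insert,
      Submodule.span_insert_eq_span hM]
  · rw [rank_eq_rank_submatrix_castSucc_add_one M hM] at h
    omega

theorem IsSymm.rank_eq_rank_submatrix_add_two {W : Matrix (Fin (m + 1)) (Fin (m + 1)) K}
    (hW : W.IsSymm) (hv : (fun i => W i.castSucc (Fin.last m)) ∉
      Submodule.span K (Set.range (W.submatrix Fin.castSucc Fin.castSucc).col)) :
    W.rank = (W.submatrix Fin.castSucc Fin.castSucc).rank + 2 := by
  set A := W.submatrix Fin.castSucc Fin.castSucc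
  have hR : (W.submatrix Fin.castSucc id).rank = A.rank + 1 :=
    rank_eq_rank_submatrix_castSucc_add_one _ hv
  have hS : (W.submatrix id Fin.castSucc).rank = A.rank + 1 := by
    rw [← hR, ← rank_transpose, transpose_submatrix, hW.eq]
  -- Dropping the last coordinate maps the columns of `W.submatrix id Fin.castSucc` onto those
  -- of `A`, and the last column of `W` onto the vector in `hv`.
  have hw :
      W.col (Fin.last m) ∉ Submodule.span K (Set.range (W.submatrix id Fin.castSucc).col) := by
    intro hw
    apply hv
    have := Submodule.apply_mem_span_image_of_mem_span (LinearMap.funLeft K K Fin.castSucc) hw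
    rwa [← Set.range_comp] at this
  rw [rank_eq_rank_submatrix_castSucc_add_one W hw, hS]

end Matrix

namespace Matrix

variable {α : Type*} [MeasurableSpace α] {ι κ : Type*} [Fintype ι] [Fintype κ]

theorem measurable_det [DecidableEq ι] {f : α → Matrix ι ι ℝ}
    (hf : ∀ i j, Measurable fun x => f x i j) : Measurable fun x => (f x).det := by
  simp_rw [det_apply]
  fun_prop

theorem measurable_rank {f : α → Matrix ι κ ℝ} (hf : ∀ i j, Measurable fun x => f x i j) :
    Measurable fun x => (f x).rank := by
  have hge (r : ℕ) : MeasurableSet {x | r ≤ (f x).rank} := by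
    simp_rw [le_rank_iff_exists_det_submatrix_ne_zero, Set.ofPred_exists]
    exact .iUnion fun g => .iUnion fun h =>
      (measurable_det fun i j => hf _ _) (measurableSet_singleton 0).compl
  refine measurable_to_countable' fun r => ?_
  have : (fun x => (f x).rank) ⁻¹' {r} = {x | r ≤ (f x).rank} \ {x | r + 1 ≤ (f x).rank} := by
    ext
    simp only [Set.mem_preimage, Set.mem_singleton_iff, Set.mem_sdiff, Set.mem_ofPred_eq]
    omega
  exact this ▸ (hge r).diff (hge (r + 1))

theorem measurableSet_mem_span_col {m : ℕ} {A : α → Matrix ι (Fin m) ℝ} {v : α → ι → ℝ}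
    (hA : ∀ i j, Measurable fun x => A x i j) (hv : ∀ i, Measurable fun x => v x i) :
    MeasurableSet {x | v x ∈ Submodule.span ℝ (Set.range (A x).col)} := by
  let M : α → Matrix ι (Fin (m + 1)) ℝ := fun x => Matrix.of fun i => Fin.snoc (A x i) (v x i)
  have hM : ∀ i j, Measurable fun x => M x i j := fun i j => by
    induction j using Fin.lastCases <;> simp [M, hA, hv]
  have hiff (x : α) :
      v x ∈ Submodule.span ℝ (Set.range (A x).col) ↔ (M x).rank = (A x).rank := by
    rw [← show (M x).submatrix id Fin.castSucc = A x by ext; simp [M],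
      ← show (M x).col (Fin.last m) = v x by ext; simp [M]]
    exact col_last_mem_span_iff_rank_eq _
  simpa only [hiff] using measurableSet_eq_fun (measurable_rank hM) (measurable_rank hA)

end Matrix

theorem Submodule.exists_finset_card_le_injOn_restrict {K ι : Type*} [Field K] [Fintype ι]
    (V : Submodule K (ι → K)) :
    ∃ s : Finset ι, #s ≤ Module.finrank K V ∧ Set.InjOn (fun (x : ι → K) (i : s) => x i) V := by
  classical
  -- The coordinates whose functionals form a basis of `Dual K V` determine a vector of `V`.
  let φ : ι → Module.Dual K V := fun i => (LinearMap.proj i).comp V.subtype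
  obtain ⟨τ, a, ha, hspan, hli⟩ := exists_linearIndependent' K φ
  have : Fintype τ := Fintype.ofInjective a ha
  refine ⟨univ.image a, ?_, fun x hx y hy hxy => ?_⟩
  · calc #(univ.image a) ≤ Fintype.card τ := card_image_le
      _ = Module.finrank K (span K (Set.range (φ ∘ a))) := (finrank_span_eq_card hli).symm
      _ ≤ Module.finrank K (Module.Dual K V) := Submodule.finrank_le _
      _ = Module.finrank K V := Subspace.dual_finrank_eq
  · have hker :
        span K (Set.range φ) ≤ LinearMap.ker (Module.Dual.eval K V (⟨x, hx⟩ - ⟨y, hy⟩)) := by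
      rw [← hspan, Submodule.span_le]
      rintro _ ⟨t, rfl⟩
      have := congrFun hxy ⟨a t, mem_image_of_mem a (mem_univ t)⟩
      simp [φ, this]
    funext i
    simpa [φ, sub_eq_zero] using hker (Submodule.subset_span ⟨i, rfl⟩)

section Bernoulli

instance (p : ℝ) : IsFiniteMeasure (bernoulliLaw p) := by
  constructor
  simp [bernoulliLaw, ENNReal.add_lt_top]

def ofBool {ι : Type*} (b : ι → Bool) : ι → ℝ := fun i => if b i then 1 else 0

theorem ofBool_injective {ι : Type*} : Function.Injective (ofBool (ι := ι)) := fun b b' h => by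
  funext i
  have := congrFun h i
  cases hb : b i <;> cases hb' : b' i <;> simp_all [ofBool]

variable {ι : Type*} [Fintype ι]

theorem encard_ofBool_mem_le (V : Submodule ℝ (ι → ℝ)) :
    {b | ofBool b ∈ V}.encard ≤ 2 ^ Module.finrank ℝ V := by
  obtain ⟨s, hs, hinj⟩ := V.exists_finset_card_le_injOn_restrict
  calc {b | ofBool b ∈ V}.encard
      ≤ (Set.univ : Set (s → Bool)).encard := by
        refine Set.encard_le_encard_of_injOn (f := fun b (i : s) => b i) (Set.mapsTo_univ _ _)
          fun b hb b' hb' h => ofBool_injective (hinj hb hb' ?_)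
        funext i
        simp [ofBool, congrFun h i]
    _ = 2 ^ #s := by simp
    _ ≤ 2 ^ Module.finrank ℝ V := pow_le_pow_right₀ one_le_two (by exact_mod_cast hs)

open scoped Classical in
theorem bernoulliLaw_half_apply {s : Set ℝ} (hs : MeasurableSet s) :
    bernoulliLaw (1 / 2) s = 2⁻¹ * #{y : Bool | (if y then 1 else 0 : ℝ) ∈ s} := by
  have h : bernoulliLaw (1 / 2) = (2⁻¹ : ENNReal) • (Measure.dirac 1 + Measure.dirac 0) := by
    rw [bernoulliLaw, show (1 : ℝ) - 1 / 2 = 1 / 2 by norm_num, ← smul_add, one_div,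
      ENNReal.ofReal_inv_of_pos two_pos, ENNReal.ofReal_ofNat]
  rw [h]
  by_cases h1 : (1 : ℝ) ∈ s <;> by_cases h0 : (0 : ℝ) ∈ s <;>
    simp [Measure.dirac_apply' _ hs, h1, h0, Finset.filter_insert, Finset.filter_singleton,
      show (univ : Finset Bool) = {true, false} from rfl, mul_two]

open scoped Classical in
theorem pi_bernoulliLaw_half_eq_map :
    Measure.pi (fun _ : ι => bernoulliLaw (1 / 2)) =
      ((2 ^ Fintype.card ι : ENNReal)⁻¹ • Measure.count).map ofBool := by
  refine Measure.pi_eq (μ := fun _ : ι => bernoulliLaw (1 / 2)) fun s hs => ?_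
  rw [Measure.map_apply .of_discrete (.univ_pi hs), Measure.smul_apply, smul_eq_mul,
    Measure.count_apply_finite _ (Set.toFinite _)]
  have : (Set.toFinite (ofBool ⁻¹' Set.univ.pi s)).toFinset =
      Fintype.piFinset fun i => {y : Bool | (if y then 1 else 0 : ℝ) ∈ s i} := by
    ext b
    simp [ofBool, Fintype.mem_piFinset]
  simp_rw [this, Fintype.card_piFinset, bernoulliLaw_half_apply (hs _), prod_mul_distrib]
  simp [ENNReal.inv_pow]

theorem pi_bernoulliLaw_half_apply_submodule_le (V : Submodule ℝ (ι → ℝ)) :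
    Measure.pi (fun _ : ι => bernoulliLaw (1 / 2)) V ≤
      2⁻¹ ^ (Fintype.card ι - Module.finrank ℝ V) := by
  have hd : Module.finrank ℝ V ≤ Fintype.card ι :=
    (Submodule.finrank_le V).trans (Module.finrank_fintype_fun_eq_card ℝ).le
  rw [pi_bernoulliLaw_half_eq_map, Measure.map_apply .of_discrete
    (Submodule.closed_of_finiteDimensional V).measurableSet, Measure.smul_apply, smul_eq_mul,
    Measure.count_apply .of_discrete]
  calc _ ≤ (2 ^ Fintype.card ι : ENNReal)⁻¹ * 2 ^ Module.finrank ℝ V := by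
        gcongr
        exact_mod_cast encard_ofBool_mem_le V
    _ = 2⁻¹ ^ (Fintype.card ι - Module.finrank ℝ V) := by
        obtain ⟨e, he⟩ := Nat.exists_eq_add_of_le' hd
        rw [he, Nat.add_sub_cancel, pow_add, ENNReal.mul_inv (by simp) (by simp), mul_assoc,
          ENNReal.inv_mul_cancel (by simp) (by simp), mul_one, ENNReal.inv_pow]

end Bernoulli

abbrev UpperIdx (m : ℕ) : Type := {q : Fin m × Fin m // q.1 < q.2}

def symmOfUpper {m : ℕ} (x : UpperIdx m → ℝ) : Matrix (Fin m) (Fin m) ℝ :=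
  Matrix.of fun i j =>
    if h : i < j then x ⟨(i, j), h⟩ else if h' : j < i then x ⟨(j, i), h'⟩ else 0

theorem measurable_symmOfUpper_apply {m : ℕ} (i j : Fin m) :
    Measurable fun x : UpperIdx m → ℝ => symmOfUpper x i j := by
  simp only [symmOfUpper, of_apply]
  split_ifs <;> fun_prop

theorem symmOfUpper_eq_of_isSymm {m : ℕ} {A : Matrix (Fin m) (Fin m) ℝ} (hA : A.IsSymm)
    (hdiag : ∀ i, A i i = 0) : symmOfUpper (fun q => A q.1.1 q.1.2) = A := by
  ext i j
  rcases lt_trichotomy i j with h | rfl | h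
  · simp [symmOfUpper, h]
  · simp [symmOfUpper, hdiag]
  · simp [symmOfUpper, h, h.not_gt, hA.apply i j]

theorem measurableSet_rank_symmOfUpper_eq_and_mem_span {m : ℕ} (r : ℕ) :
    MeasurableSet {z : (UpperIdx m → ℝ) × (Fin m → ℝ) | (symmOfUpper z.1).rank = r ∧
      z.2 ∈ Submodule.span ℝ (Set.range (symmOfUpper z.1).col)} :=
  ((measurable_rank fun i j => (measurable_symmOfUpper_apply i j).comp measurable_fst)
      (measurableSet_singleton r)).inter
    (measurableSet_mem_span_col (fun i j => (measurable_symmOfUpper_apply i j).comp measurable_fst)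
      fun i => (measurable_pi_apply i).comp measurable_snd)

namespace IsERMatrix

variable {Ω : Type*} [MeasureSpace Ω] {m : ℕ} {p : ℝ} {G : Ω → Matrix (Fin m) (Fin m) ℝ}

theorem isProbabilityMeasure (hG : IsERMatrix p G) : IsProbabilityMeasure (volume : Measure Ω) :=
  hG.2.2.2.1.isProbabilityMeasure

theorem map_entries_eq_pi (hG : IsERMatrix p G) {κ : Type*} [Fintype κ] {g : κ → UpperIdx m}
    (hg : g.Injective) :
    volume.map (fun ω k => G ω (g k).1.1 (g k).1.2) = Measure.pi fun _ : κ => bernoulliLaw p := by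
  obtain ⟨-, -, hmeas, hind, hlaw⟩ := hG
  rw [(hind.precomp hg).map_fun_eq_pi_map fun k => (hmeas _ _).aemeasurable]
  simp only [hlaw]

theorem measure_rank_submatrix_eq_pi (hG : IsERMatrix p G) {n : ℕ} {f : Fin n → Fin m}
    (hf : StrictMono f) (r : ℕ) :
    volume {ω | ((G ω).submatrix f f).rank = r} =
      Measure.pi (fun _ : UpperIdx n => bernoulliLaw p) {x | (symmOfUpper x).rank = r} := by
  let g : UpperIdx n → UpperIdx m := fun q => ⟨(f q.1.1, f q.1.2), hf q.2⟩
  have hg : g.Injective := fun q q' h => by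
    simp only [g, Subtype.mk.injEq, Prod.mk.injEq, hf.injective.eq_iff] at h
    exact Subtype.ext (Prod.ext h.1 h.2)
  have hS : MeasurableSet {x : UpperIdx n → ℝ | (symmOfUpper x).rank = r} :=
    (measurable_rank measurable_symmOfUpper_apply) (measurableSet_singleton r)
  rw [← hG.map_entries_eq_pi hg,
    Measure.map_apply (measurable_pi_lambda _ fun q => hG.2.2.1 _ _) hS]
  congr 1
  ext ω
  have hA : symmOfUpper (fun q => G ω (g q).1.1 (g q).1.2) = (G ω).submatrix f f :=
    symmOfUpper_eq_of_isSymm ((hG.1 ω).submatrix f) fun i => hG.2.1 ω (f i)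
  simp only [Set.mem_preimage, Set.mem_ofPred_eq, hA]

variable {H : Ω → Matrix (Fin (m + 1)) (Fin (m + 1)) ℝ}

theorem map_upperBlock_lastCol_eq_prod (hH : IsERMatrix p H) :
    volume.map (fun ω => ((fun q : UpperIdx m => H ω q.1.1.castSucc q.1.2.castSucc),
      fun i : Fin m => H ω i.castSucc (Fin.last m))) =
      (Measure.pi fun _ : UpperIdx m => bernoulliLaw p).prod
        (Measure.pi fun _ : Fin m => bernoulliLaw p) := by
  let e₁ : UpperIdx m → UpperIdx (m + 1) := fun q =>
    ⟨(q.1.1.castSucc, q.1.2.castSucc), Fin.castSucc_lt_castSucc_iff.mpr q.2⟩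
  let e₂ : Fin m → UpperIdx (m + 1) := fun i => ⟨(i.castSucc, Fin.last m), Fin.castSucc_lt_last i⟩
  have he : (Sum.elim e₁ e₂).Injective := by
    refine Function.Injective.sumElim (fun q q' h => ?_) (fun i i' h => ?_) fun q i h => ?_
    · simp only [e₁, Subtype.mk.injEq, Prod.mk.injEq, Fin.castSucc_inj] at h
      exact Subtype.ext (Prod.ext h.1 h.2)
    · simpa [e₂] using h
    · simp only [e₁, e₂, Subtype.mk.injEq, Prod.mk.injEq] at h
      exact (Fin.castSucc_lt_last q.1.2).ne h.2
  rw [← (measurePreserving_sumPiEquivProdPi fun _ => bernoulliLaw p).map_eq,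
    ← hH.map_entries_eq_pi he, Measure.map_map (MeasurableEquiv.measurable _)
      (measurable_pi_lambda _ fun k => hH.2.2.1 _ _)]
  rfl

theorem measure_rank_eq_and_mem_span_le (hH : IsERMatrix (1 / 2) H) (r : ℕ) :
    volume {ω | ((H ω).submatrix Fin.castSucc Fin.castSucc).rank = r ∧
      (fun i => H ω i.castSucc (Fin.last m)) ∈
        Submodule.span ℝ (Set.range ((H ω).submatrix Fin.castSucc Fin.castSucc).col)} ≤
      2⁻¹ ^ (m - r) * volume {ω | ((H ω).submatrix Fin.castSucc Fin.castSucc).rank = r} := by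
  let B : Set ((UpperIdx m → ℝ) × (Fin m → ℝ)) := {z | (symmOfUpper z.1).rank = r ∧
    z.2 ∈ Submodule.span ℝ (Set.range (symmOfUpper z.1).col)}
  have hpre : {ω | ((H ω).submatrix Fin.castSucc Fin.castSucc).rank = r ∧
      (fun i => H ω i.castSucc (Fin.last m)) ∈
        Submodule.span ℝ (Set.range ((H ω).submatrix Fin.castSucc Fin.castSucc).col)} =
      (fun ω => ((fun q : UpperIdx m => H ω q.1.1.castSucc q.1.2.castSucc),
        fun i : Fin m => H ω i.castSucc (Fin.last m))) ⁻¹' B := by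
    ext ω
    have hA : symmOfUpper (fun q : UpperIdx m => H ω q.1.1.castSucc q.1.2.castSucc) =
        (H ω).submatrix Fin.castSucc Fin.castSucc :=
      symmOfUpper_eq_of_isSymm ((hH.1 ω).submatrix Fin.castSucc) fun i => hH.2.1 ω i.castSucc
    simp only [B, Set.mem_preimage, Set.mem_ofPred_eq, hA]
  have hB : MeasurableSet B := measurableSet_rank_symmOfUpper_eq_and_mem_span r
  have hS : MeasurableSet {x : UpperIdx m → ℝ | (symmOfUpper x).rank = r} :=
    (measurable_rank measurable_symmOfUpper_apply) (measurableSet_singleton r)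
  rw [hpre, ← Measure.map_apply (.prodMk (measurable_pi_lambda _ fun q => hH.2.2.1 _ _)
      (measurable_pi_lambda _ fun i => hH.2.2.1 _ _)) hB, hH.map_upperBlock_lastCol_eq_prod,
    Measure.prod_apply hB, hH.measure_rank_submatrix_eq_pi Fin.strictMono_castSucc,
    ← lintegral_indicator_const hS]
  refine lintegral_mono fun x => ?_
  by_cases hx : (symmOfUpper x).rank = r
  · have hslice : Prod.mk x ⁻¹' B = Submodule.span ℝ (Set.range (symmOfUpper x).col) := by
      ext w
      simp [B, hx]
    rw [hslice, Set.indicator_of_mem (show x ∈ {x | (symmOfUpper x).rank = r} from hx)]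
    exact (pi_bernoulliLaw_half_apply_submodule_le _).trans_eq
      (by rw [Fintype.card_fin, ← rank_eq_finrank_span_cols, hx])
  · have hslice : Prod.mk x ⁻¹' B = ∅ := by
      ext w
      simp [B, hx]
    simp [hslice]

theorem measure_rank_submatrix_castSucc_le (hH : IsERMatrix (1 / 2) H) (r : ℕ) :
    volume {ω | ((H ω).submatrix Fin.castSucc Fin.castSucc).rank = r} ≤
      volume {ω | (H ω).rank = r + 2} +
        2⁻¹ ^ (m - r) * volume {ω | ((H ω).submatrix Fin.castSucc Fin.castSucc).rank = r} := by
  refine (measure_mono fun ω hω => ?_).trans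
    ((measure_union_le _ _).trans (add_le_add le_rfl (hH.measure_rank_eq_and_mem_span_le r)))
  by_cases hv : (fun i => H ω i.castSucc (Fin.last m)) ∈
      Submodule.span ℝ (Set.range ((H ω).submatrix Fin.castSucc Fin.castSucc).col)
  · exact Or.inr ⟨hω, hv⟩
  · left
    rw [Set.mem_ofPred_eq, (hH.1 ω).rank_eq_rank_submatrix_add_two hv, hω]

end IsERMatrix

section Family

variable {Ω : ℕ → Type*} [∀ m, MeasureSpace (Ω m)] {G : ∀ m, Ω m → Matrix (Fin m) (Fin m) ℝ}

theorem one_sub_mul_measureReal_rank_le (hG : ∀ m, IsERMatrix (1 / 2) (G m)) (m r : ℕ) :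
    (1 - 2⁻¹ ^ (m - r)) * volume.real {ω | (G m ω).rank = r} ≤
      volume.real {ω | (G (m + 1) ω).rank = r + 2} := by
  have := (hG m).isProbabilityMeasure
  have := (hG (m + 1)).isProbabilityMeasure
  have hstep := (hG (m + 1)).measure_rank_submatrix_castSucc_le r
  rw [(hG (m + 1)).measure_rank_submatrix_eq_pi Fin.strictMono_castSucc,
    ← (hG m).measure_rank_submatrix_eq_pi strictMono_id] at hstep
  simp only [submatrix_id_id] at hstep
  have hfin : 2⁻¹ ^ (m - r) * volume {ω | (G m ω).rank = r} ≠ ⊤ :=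
    ENNReal.mul_ne_top (by simp) (measure_ne_top _ _)
  have hreal := ENNReal.toReal_mono (ENNReal.add_ne_top.mpr ⟨measure_ne_top _ _, hfin⟩) hstep
  rw [ENNReal.toReal_add (measure_ne_top _ _) hfin, ENNReal.toReal_mul] at hreal
  simp only [ENNReal.toReal_pow, ENNReal.toReal_inv, ENNReal.toReal_ofNat] at hreal
  simp only [measureReal_def]
  linarith

theorem measureReal_rank_mul_prod_le (hG : ∀ m, IsERMatrix (1 / 2) (G m)) (m r j : ℕ) :
    volume.real {ω | (G m ω).rank = r} * ∏ i ∈ range j, (1 - 2⁻¹ ^ (m - r - i)) ≤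
      volume.real {ω | (G (m + j) ω).rank = r + 2 * j} := by
  induction j with
  | zero => simp
  | succ j ih =>
    have hstep := one_sub_mul_measureReal_rank_le hG (m + j) (r + 2 * j)
    rw [show m + j - (r + 2 * j) = m - r - j by omega] at hstep
    rw [prod_range_succ, ← mul_assoc, mul_comm _ (1 - _),
      show r + 2 * (j + 1) = r + 2 * j + 2 by ring]
    have hfactor : (0 : ℝ) ≤ 1 - 2⁻¹ ^ (m - r - j) :=
      sub_nonneg.mpr (pow_le_one₀ (by norm_num) (by norm_num))
    exact (mul_le_mul_of_nonneg_left ih hfactor).trans hstep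

end Family

theorem inv_two_add_le_prod_one_sub_inv_two_pow (c : ℕ) :
    (2⁻¹ : ℝ) + 2⁻¹ ^ (c + 1) ≤ ∏ i ∈ range c, (1 - 2⁻¹ ^ (c + 1 - i)) := by
  induction c with
  | zero => norm_num
  | succ c ih =>
    rw [prod_range_succ']
    simp only [show ∀ i, c + 1 + 1 - (i + 1) = c + 1 - i from fun i => by omega, Nat.sub_zero]
    have hx : (2⁻¹ : ℝ) ^ (c + 1) ≤ 2⁻¹ := pow_le_of_le_one (by norm_num) (by norm_num) (by omega)
    have hx0 : (0 : ℝ) ≤ 2⁻¹ ^ (c + 1) := by positivity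
    rw [pow_succ _ (c + 1)]
    nlinarith

theorem rank_comparison_general
    (Ω : ℕ → Type) [∀ m, MeasureSpace (Ω m)]
    (G : ∀ m, Ω m → Matrix (Fin m) (Fin m) ℝ)
    (hG : ∀ m, IsERMatrix (1 / 2 : ℝ) (G m))
    (n k : ℕ) (hk : k ≤ n - 1) :
    volume {ω | (G n ω).rank = k} ≤
      2 * volume {ω | (G (2 * n - k - 1) ω).rank = 2 * n - k - 2} := by
  obtain rfl | hn := Nat.eq_zero_or_pos n
  · obtain rfl : k = 0 := by omega
    exact le_mul_of_one_le_left (by positivity) one_le_two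
  obtain ⟨c, rfl⟩ : ∃ c, n = k + c + 1 := ⟨n - 1 - k, by omega⟩
  rw [show 2 * (k + c + 1) - k - 1 = k + c + 1 + c by omega,
    show 2 * (k + c + 1) - k - 2 = k + 2 * c by omega]
  have := (hG (k + c + 1)).isProbabilityMeasure
  have := (hG (k + c + 1 + c)).isProbabilityMeasure
  have hchain := measureReal_rank_mul_prod_le hG (k + c + 1) k c
  simp only [show ∀ i, k + c + 1 - k - i = c + 1 - i from fun i => by omega] at hchain
  have hprod := inv_two_add_le_prod_one_sub_inv_two_pow c
  rw [← ENNReal.toReal_le_toReal (measure_ne_top _ _) (by finiteness), ENNReal.toReal_mul]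
  simp only [← measureReal_def, ENNReal.toReal_ofNat]
  nlinarith [measureReal_nonneg (μ := volume) (s := {ω | (G (k + c + 1) ω).rank = k}),
    pow_pos (by norm_num : (0 : ℝ) < 2⁻¹) (c + 1)]

/-- **Lemma 6.2.** For the Erdős–Rényi model with `p = 1/2`, for all
`0 ≤ k ≤ n-1`,
`P(Rank G_n = k) ≤ 2 P(Rank G_{2n-k-1} = 2n-k-2)`. -/
theorem rank_comparison
    (Ω : ℕ → Type) [∀ m, MeasureSpace (Ω m)]
    [∀ m, IsProbabilityMeasure (volume : Measure (Ω m))]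
    (G : ∀ m, Ω m → Matrix (Fin m) (Fin m) ℝ)
    (hG : ∀ m, IsERMatrix (1 / 2 : ℝ) (G m))
    (n k : ℕ) (hk : k ≤ n - 1) :
    volume {ω | (G n ω).rank = k} ≤
      2 * volume {ω | (G (2 * n - k - 1) ω).rank = 2 * n - k - 2} :=
  rank_comparison_general Ω G hG n k hk
end
end
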